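/- Fix reals a < b and positive constants ρ, A, I, E, T₀, κ, G. Let w, p_w, φ, p_φ : ℝ × ℝ → ℝ be smooth and assume the implicit Timoshenko dynamics on ℝ × [a,b]: ∂ₜw = p_w/(ρA); ∂ₜp_w = ∂ₓ(T₀ ∂ₓw) + ∂ₓ( A κ G (∂ₓw − φ) ); ∂ₜφ = p_φ/(ρI); ∂ₜp_φ = ∂ₓ(E I ∂ₓφ) + A κ G (∂ₓw − φ). Define H(t) := (1/2)∫ₐᵇ ( p_w²/(ρA) + p_φ²/(ρI) + T₀ (∂ₓw)² + E I (∂ₓφ)² + A κ G (∂ₓw − φ)² ) dx. Then for all t, H'(t) = [ ∂ₜw · ( T₀ ∂ₓw + A κ G (∂ₓw − φ) ) + ∂ₜφ · E I ∂ₓφ ]ₐᵇ, where [g]ₐᵇ := g(t,b) − g(t,a). -/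

import Mathlib

noncomputable def dt (h : ℝ → ℝ → ℝ) : ℝ → ℝ → ℝ := fun t x => deriv (fun s => h s x) t
noncomputable def dx (h : ℝ → ℝ → ℝ) : ℝ → ℝ → ℝ := fun t x => deriv (fun y => h t y) x
open Function

/-- energy density -/
noncomputable def Fen (c₁ c₂ c₃ c₄ c₅ : ℝ) (w pw φ pφ : ℝ → ℝ → ℝ) : ℝ → ℝ → ℝ :=
  fun s x => pw s x ^ 2 / c₁ + pφ s x ^ 2 / c₂ + c₃ * dx w s x ^ 2
    + c₄ * dx φ s x ^ 2 + c₅ * (dx w s x - φ s x) ^ 2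

/-- boundary flux density -/
noncomputable def Gbd (c₃ c₄ c₅ : ℝ) (w φ : ℝ → ℝ → ℝ) : ℝ → ℝ → ℝ :=
  fun s x => dt w s x * (c₃ * dx w s x + c₅ * (dx w s x - φ s x))
    + dt φ s x * (c₄ * dx φ s x)

section helpers
variable {h : ℝ → ℝ → ℝ}

lemma hasDerivAt_slice_t (hh : ContDiff ℝ (⊤ : ℕ∞) (uncurry h)) (t x : ℝ) :
    HasDerivAt (fun s => h s x) (fderiv ℝ (uncurry h) (t, x) (1, 0)) t := by
  have hd : HasFDerivAt (uncurry h) (fderiv ℝ (uncurry h) (t, x)) (t, x) :=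
    (hh.differentiable (by simp) (t, x)).hasFDerivAt
  have hc : HasDerivAt (fun s : ℝ => (s, x)) ((1 : ℝ), (0 : ℝ)) t := by
    simpa using (hasDerivAt_id t).prodMk (hasDerivAt_const t x)
  exact hd.comp_hasDerivAt t hc

lemma hasDerivAt_slice_x (hh : ContDiff ℝ (⊤ : ℕ∞) (uncurry h)) (t x : ℝ) :
    HasDerivAt (fun y => h t y) (fderiv ℝ (uncurry h) (t, x) (0, 1)) x := by
  have hd : HasFDerivAt (uncurry h) (fderiv ℝ (uncurry h) (t, x)) (t, x) :=
    (hh.differentiable (by simp) (t, x)).hasFDerivAt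
  have hc : HasDerivAt (fun y : ℝ => (t, y)) ((0 : ℝ), (1 : ℝ)) x := by
    simpa using (hasDerivAt_const x t).prodMk (hasDerivAt_id x)
  exact hd.comp_hasDerivAt x hc

lemma dt_eq (hh : ContDiff ℝ (⊤ : ℕ∞) (uncurry h)) (t x : ℝ) :
    dt h t x = fderiv ℝ (uncurry h) (t, x) (1, 0) := (hasDerivAt_slice_t hh t x).deriv

lemma dx_eq (hh : ContDiff ℝ (⊤ : ℕ∞) (uncurry h)) (t x : ℝ) :
    dx h t x = fderiv ℝ (uncurry h) (t, x) (0, 1) := (hasDerivAt_slice_x hh t x).deriv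

lemma hasDerivAt_dt (hh : ContDiff ℝ (⊤ : ℕ∞) (uncurry h)) (t x : ℝ) :
    HasDerivAt (fun s => h s x) (dt h t x) t := by
  rw [dt_eq hh]; exact hasDerivAt_slice_t hh t x

lemma hasDerivAt_dx (hh : ContDiff ℝ (⊤ : ℕ∞) (uncurry h)) (t x : ℝ) :
    HasDerivAt (fun y => h t y) (dx h t x) x := by
  rw [dx_eq hh]; exact hasDerivAt_slice_x hh t x

lemma contDiff_dt (hh : ContDiff ℝ (⊤ : ℕ∞) (uncurry h)) :
    ContDiff ℝ (⊤ : ℕ∞) (uncurry (dt h)) := by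
  have : (uncurry (dt h)) = fun p : ℝ × ℝ => fderiv ℝ (uncurry h) p ((1 : ℝ), (0 : ℝ)) := by
    funext p; exact dt_eq hh p.1 p.2
  rw [this]
  exact (hh.fderiv_right (by simp)).clm_apply contDiff_const

lemma contDiff_dx (hh : ContDiff ℝ (⊤ : ℕ∞) (uncurry h)) :
    ContDiff ℝ (⊤ : ℕ∞) (uncurry (dx h)) := by
  have : (uncurry (dx h)) = fun p : ℝ × ℝ => fderiv ℝ (uncurry h) p ((0 : ℝ), (1 : ℝ)) := by
    funext p; exact dx_eq hh p.1 p.2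
  rw [this]
  exact (hh.fderiv_right (by simp)).clm_apply contDiff_const

lemma clairaut (hh : ContDiff ℝ (⊤ : ℕ∞) (uncurry h)) (t x : ℝ) :
    dt (dx h) t x = dx (dt h) t x := by
  set f := uncurry h
  set f' := fderiv ℝ f
  set f'' := fderiv ℝ f' (t, x) with hf''
  have hdf' : DifferentiableAt ℝ f' (t, x) :=
    ((hh.fderiv_right (m := (⊤ : ℕ∞)) (by simp)).differentiable (by simp)) (t, x)
  have hf'd : HasFDerivAt f' f'' (t, x) := hdf'.hasFDerivAt
  have hsymm : ∀ v w : ℝ × ℝ, f'' v w = f'' w v :=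
    second_derivative_symmetric (fun y => ((hh.differentiable (by simp)) y).hasFDerivAt) hf'd
  have h1 : dt (dx h) t x = f'' (1, 0) (0, 1) := by
    have hc : HasDerivAt (fun s : ℝ => (s, x)) ((1 : ℝ), (0 : ℝ)) t := by
      simpa using (hasDerivAt_id t).prodMk (hasDerivAt_const t x)
    have h2 : HasDerivAt (fun s : ℝ => f' (s, x)) (f'' (1, 0)) t :=
      hf'd.comp_hasDerivAt t hc
    have h3 : HasDerivAt (fun s : ℝ => f' (s, x) (0, 1)) (f'' (1, 0) (0, 1)) t := by
      simpa using h2.clm_apply (hasDerivAt_const t ((0 : ℝ), (1 : ℝ)))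
    have h4 : (fun s : ℝ => dx h s x) = fun s : ℝ => f' (s, x) (0, 1) := by
      funext s; exact dx_eq hh s x
    show deriv (fun s => dx h s x) t = _
    rw [h4]; exact h3.deriv
  have h2 : dx (dt h) t x = f'' (0, 1) (1, 0) := by
    have hc : HasDerivAt (fun y : ℝ => (t, y)) ((0 : ℝ), (1 : ℝ)) x := by
      simpa using (hasDerivAt_const x t).prodMk (hasDerivAt_id x)
    have h2 : HasDerivAt (fun y : ℝ => f' (t, y)) (f'' (0, 1)) x :=
      hf'd.comp_hasDerivAt x hc
    have h3 : HasDerivAt (fun y : ℝ => f' (t, y) (1, 0)) (f'' (0, 1) (1, 0)) x := by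
      simpa using h2.clm_apply (hasDerivAt_const x ((1 : ℝ), (0 : ℝ)))
    have h4 : (fun y : ℝ => dt h t y) = fun y : ℝ => f' (t, y) (1, 0) := by
      funext y; exact dt_eq hh t y
    show deriv (fun y => dt h t y) x = _
    rw [h4]; exact h3.deriv
  rw [h1, h2, hsymm]

lemma contSliceX (hh : ContDiff ℝ (⊤ : ℕ∞) (uncurry h)) (t : ℝ) :
    Continuous (fun x => h t x) :=
  hh.continuous.comp (continuous_const.prodMk continuous_id)

end helpers

lemma contDiff_Fen {w pw φ pφ : ℝ → ℝ → ℝ} (c₁ c₂ c₃ c₄ c₅ : ℝ)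
    (hw : ContDiff ℝ (⊤ : ℕ∞) (uncurry w)) (hpw : ContDiff ℝ (⊤ : ℕ∞) (uncurry pw))
    (hφ : ContDiff ℝ (⊤ : ℕ∞) (uncurry φ)) (hpφ : ContDiff ℝ (⊤ : ℕ∞) (uncurry pφ)) :
    ContDiff ℝ (⊤ : ℕ∞) (uncurry (Fen c₁ c₂ c₃ c₄ c₅ w pw φ pφ)) := by
  have hdxw := contDiff_dx hw
  have hdxφ := contDiff_dx hφ
  exact (((((hpw.pow 2).div_const c₁).add ((hpφ.pow 2).div_const c₂)).add
      (contDiff_const.mul (hdxw.pow 2))).add (contDiff_const.mul (hdxφ.pow 2))).add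
      (contDiff_const.mul ((hdxw.sub hφ).pow 2))

lemma contDiff_Gbd {w φ : ℝ → ℝ → ℝ} (c₃ c₄ c₅ : ℝ)
    (hw : ContDiff ℝ (⊤ : ℕ∞) (uncurry w)) (hφ : ContDiff ℝ (⊤ : ℕ∞) (uncurry φ)) :
    ContDiff ℝ (⊤ : ℕ∞) (uncurry (Gbd c₃ c₄ c₅ w φ)) := by
  have hdxw := contDiff_dx hw
  have hdxφ := contDiff_dx hφ
  have hdtw := contDiff_dt hw
  have hdtφ := contDiff_dt hφ
  exact (hdtw.mul ((contDiff_const.mul hdxw).add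
      (contDiff_const.mul (hdxw.sub hφ)))).add (hdtφ.mul (contDiff_const.mul hdxφ))

/-- Power balance for the implicit Timoshenko beam:
`H'(t) = [∂ₜw (T₀∂ₓw + AκG(∂ₓw − φ)) + ∂ₜφ EI∂ₓφ]ₐᵇ`. -/
theorem stmt11 (a b : ℝ) (hab : a < b) (ρ A I E T₀ κ G : ℝ)
    (hρ : 0 < ρ) (hA : 0 < A) (hI : 0 < I) (hE : 0 < E) (hT : 0 < T₀) (hκ : 0 < κ)
    (hG : 0 < G)
    (w pw φ pφ : ℝ → ℝ → ℝ)
    (hw : ContDiff ℝ (⊤ : ℕ∞) (Function.uncurry w)) (hpw : ContDiff ℝ (⊤ : ℕ∞) (Function.uncurry pw))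
    (hφ : ContDiff ℝ (⊤ : ℕ∞) (Function.uncurry φ)) (hpφ : ContDiff ℝ (⊤ : ℕ∞) (Function.uncurry pφ))
    (hdyn₁ : ∀ t : ℝ, ∀ x ∈ Set.Icc a b, dt w t x = pw t x / (ρ * A))
    (hdyn₂ : ∀ t : ℝ, ∀ x ∈ Set.Icc a b,
      dt pw t x = T₀ * dx (dx w) t x + A * κ * G * (dx (dx w) t x - dx φ t x))
    (hdyn₃ : ∀ t : ℝ, ∀ x ∈ Set.Icc a b, dt φ t x = pφ t x / (ρ * I))
    (hdyn₄ : ∀ t : ℝ, ∀ x ∈ Set.Icc a b,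
      dt pφ t x = E * I * dx (dx φ) t x + A * κ * G * (dx w t x - φ t x)) :
    ∀ t : ℝ,
      HasDerivAt
        (fun s => (1 / 2 : ℝ) * ∫ x in a..b,
          ((pw s x) ^ 2 / (ρ * A) + (pφ s x) ^ 2 / (ρ * I) + T₀ * (dx w s x) ^ 2
            + E * I * (dx φ s x) ^ 2 + A * κ * G * (dx w s x - φ s x) ^ 2))
        ((dt w t b * (T₀ * dx w t b + A * κ * G * (dx w t b - φ t b))
            + dt φ t b * (E * I * dx φ t b))
          - (dt w t a * (T₀ * dx w t a + A * κ * G * (dx w t a - φ t a))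
            + dt φ t a * (E * I * dx φ t a))) t := by
  intro t
  set c₅ : ℝ := A * κ * G with hc₅
  set F : ℝ → ℝ → ℝ := Fen (ρ * A) (ρ * I) T₀ (E * I) c₅ w pw φ pφ with hFdef
  set Gf : ℝ → ℝ → ℝ := Gbd T₀ (E * I) c₅ w φ with hGdef
  have hF : ContDiff ℝ (⊤ : ℕ∞) (Function.uncurry F) := contDiff_Fen _ _ _ _ _ hw hpw hφ hpφ
  have hGs : ContDiff ℝ (⊤ : ℕ∞) (Function.uncurry Gf) := contDiff_Gbd _ _ _ hw hφ
  have hF' : ContDiff ℝ (⊤ : ℕ∞) (Function.uncurry (dt F)) := contDiff_dt hF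
  have hρA : (ρ * A) ≠ 0 := by positivity
  have hρI : (ρ * I) ≠ 0 := by positivity
  -- Step A : differentiate under the integral sign
  obtain ⟨C, hC⟩ : ∃ C, ∀ p ∈ (Set.Icc (t - 1) (t + 1)) ×ˢ (Set.uIcc a b),
      ‖Function.uncurry (dt F) p‖ ≤ C :=
    (isCompact_Icc.prod isCompact_uIcc).exists_bound_of_continuousOn hF'.continuous.continuousOn
  have hstepA : HasDerivAt (fun s => ∫ x in a..b, F s x)
      (∫ x in a..b, dt F t x) t := by
    have hmain := intervalIntegral.hasDerivAt_integral_of_dominated_loc_of_deriv_le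
      (F := F) (F' := dt F) (x₀ := t) (a := a) (b := b) (μ := MeasureTheory.volume)
      (bound := fun _ => C) (Metric.ball_mem_nhds t one_pos)
      (Filter.Eventually.of_forall fun s =>
        ((contSliceX hF s).aestronglyMeasurable))
      ((contSliceX hF t).intervalIntegrable a b)
      ((contSliceX hF' t).aestronglyMeasurable)
      (MeasureTheory.ae_of_all _ fun y hy s hs => by
        refine hC (s, y) ⟨?_, Set.uIoc_subset_uIcc hy⟩
        have := Metric.mem_ball.1 hs
        rw [Real.dist_eq] at this
        constructor <;> [linarith [neg_abs_le (s - t)]; linarith [le_abs_self (s - t)]])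
      (by apply Continuous.intervalIntegrable; exact continuous_const)
      (MeasureTheory.ae_of_all _ fun y hy s hs => hasDerivAt_dt hF s y)
    exact hmain.2
  -- Step B : pointwise identity for the integrand
  have key : Set.EqOn (fun x => dt F t x) (fun x => 2 * dx Gf t x) (Set.uIcc a b) := by
    intro x hx
    rw [Set.uIcc_of_le hab.le] at hx
    have hdxw := contDiff_dx hw
    have hdxφ := contDiff_dx hφ
    have hdtw := contDiff_dt hw
    have hdtφ := contDiff_dt hφ
    -- time derivative of the energy density
    have e1 : dt F t x = 2 * pw t x * dt pw t x / (ρ * A)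
        + 2 * pφ t x * dt pφ t x / (ρ * I)
        + T₀ * (2 * dx w t x * dt (dx w) t x)
        + E * I * (2 * dx φ t x * dt (dx φ) t x)
        + c₅ * (2 * (dx w t x - φ t x) * (dt (dx w) t x - dt φ t x)) := by
      have Hpw := hasDerivAt_dt hpw t x
      have Hpφ := hasDerivAt_dt hpφ t x
      have Hdxw := hasDerivAt_dt hdxw t x
      have Hdxφ := hasDerivAt_dt hdxφ t x
      have Hφ := hasDerivAt_dt hφ t x
      have hD := (((((Hpw.pow 2).div_const (ρ * A)).add ((Hpφ.pow 2).div_const (ρ * I))).add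
          ((Hdxw.pow 2).const_mul T₀)).add ((Hdxφ.pow 2).const_mul (E * I))).add
          (((Hdxw.sub Hφ).pow 2).const_mul c₅)
      have hD' : HasDerivAt (fun s => F s x) _ t := hD
      show deriv (fun s => F s x) t = _
      rw [hD'.deriv]
      push_cast
      simp only [Pi.sub_apply]
      ring
    -- space derivative of the flux density
    have e2 : dx Gf t x = dx (dt w) t x * (T₀ * dx w t x + c₅ * (dx w t x - φ t x))
        + dt w t x * (T₀ * dx (dx w) t x + c₅ * (dx (dx w) t x - dx φ t x))
        + (dx (dt φ) t x * (E * I * dx φ t x) + dt φ t x * (E * I * dx (dx φ) t x)) := by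
      have Hdtw := hasDerivAt_dx hdtw t x
      have Hdxw := hasDerivAt_dx (contDiff_dx hw) t x
      have Hφ := hasDerivAt_dx hφ t x
      have Hdtφ := hasDerivAt_dx hdtφ t x
      have Hdxφ := hasDerivAt_dx (contDiff_dx hφ) t x
      have hD := (Hdtw.mul ((Hdxw.const_mul T₀).add ((Hdxw.sub Hφ).const_mul c₅))).add
          (Hdtφ.mul (Hdxφ.const_mul (E * I)))
      have hD' : HasDerivAt (fun y => Gf t y) _ x := hD
      show deriv (fun y => Gf t y) x = _
      rw [hD'.deriv]
      rfl
    have hpweq : pw t x = ρ * A * dt w t x := by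
      rw [hdyn₁ t x hx]; field_simp
    have hpφeq : pφ t x = ρ * I * dt φ t x := by
      rw [hdyn₃ t x hx]; field_simp
    have ctw := clairaut hw t x
    have ctφ := clairaut hφ t x
    show dt F t x = 2 * dx Gf t x
    rw [e1, e2, hpweq, hpφeq, ctw, ctφ, hdyn₂ t x hx, hdyn₄ t x hx]
    field_simp
    ring
  -- Step C : fundamental theorem of calculus
  have ftc : ∫ x in a..b, dx Gf t x = Gf t b - Gf t a := by
    apply intervalIntegral.integral_eq_sub_of_hasDerivAt
    · exact fun x _ => hasDerivAt_dx hGs t x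
    · exact (contSliceX (contDiff_dx hGs) t).intervalIntegrable a b
  have hval : ∫ x in a..b, dt F t x = 2 * (Gf t b - Gf t a) := by
    rw [intervalIntegral.integral_congr key]
    rw [intervalIntegral.integral_const_mul, ftc]
  have final := hstepA.const_mul ((1 : ℝ) / 2)
  rw [hval] at final
  have : (1 : ℝ) / 2 * (2 * (Gf t b - Gf t a)) = Gf t b - Gf t a := by ring
  rw [this] at final
  simpa [hGdef, Gbd, hFdef, Fen] using final
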